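/- arXiv:2212.06136 — 3 statements merged into one kernel-verified Lean document; each statement's English description precedes it below -/
import Mathlib

section
/- If there exists a diagonal matrix D with positive diagonal entries such that D(I−Γ) + (I−Γ)^T D is positive definite, then the linear complementarity problem LCP(I−Γ, −r) has at most one solution. -/
open Matrix

/-- If `D(I-Γ) + (I-Γ)ᵀD` is positive definite for some positive diagonal matrix `D`,
then the LCP `LCP(I-Γ, -r)` has at most one solution. -/
theorem lcp_at_most_one_solution {N : ℕ} (Γ : Matrix (Fin N) (Fin N) ℝ) (r : Fin N → ℝ)
    (D : Fin N → ℝ) (hD : ∀ i, 0 < D i)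
    (hpos : (Matrix.diagonal D * (1 - Γ) + (1 - Γ)ᵀ * Matrix.diagonal D).PosDef) :
    ∀ z z' : Fin N → ℝ,
      ((∀ i, 0 ≤ z i) ∧ (∀ i, 0 ≤ ((1 - Γ).mulVec z - r) i) ∧
        z ⬝ᵥ ((1 - Γ).mulVec z - r) = 0) →
      ((∀ i, 0 ≤ z' i) ∧ (∀ i, 0 ≤ ((1 - Γ).mulVec z' - r) i) ∧
        z' ⬝ᵥ ((1 - Γ).mulVec z' - r) = 0) →
      z = z' := by
  intro z z' hz hz'
  obtain ⟨hz0, hw0, hzw⟩ := hz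
  obtain ⟨hz'0, hw'0, hzw'⟩ := hz'
  set M : Matrix (Fin N) (Fin N) ℝ := 1 - Γ with hM
  set w : Fin N → ℝ := M *ᵥ z - r with hw
  set w' : Fin N → ℝ := M *ᵥ z' - r with hw'
  -- pointwise complementarity
  have hpt : ∀ i, z i * w i = 0 := by
    have h := (Finset.sum_eq_zero_iff_of_nonneg
      (fun i _ => mul_nonneg (hz0 i) (hw0 i))).mp hzw
    exact fun i => h i (Finset.mem_univ i)
  have hpt' : ∀ i, z' i * w' i = 0 := by
    have h := (Finset.sum_eq_zero_iff_of_nonneg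
      (fun i _ => mul_nonneg (hz'0 i) (hw'0 i))).mp hzw'
    exact fun i => h i (Finset.mem_univ i)
  by_contra hne
  set u : Fin N → ℝ := z - z' with hu
  have hune : u ≠ 0 := sub_ne_zero.mpr hne
  have hMu : M *ᵥ u = w - w' := by
    simp only [hu, hw, hw', Matrix.mulVec_sub, sub_sub_sub_cancel_right]
  -- the quadratic form is nonpositive
  have hterm : ∀ i, u i * (M *ᵥ u) i ≤ 0 := by
    intro i
    have : u i * (M *ᵥ u) i = -(z i * w' i + z' i * w i) := by
      rw [hMu]
      simp only [hu, Pi.sub_apply]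
      linear_combination hpt i + hpt' i
    rw [this]
    have := mul_nonneg (hz0 i) (hw'0 i)
    have := mul_nonneg (hz'0 i) (hw0 i)
    linarith
  have hq : u ⬝ᵥ ((Matrix.diagonal D * M + Mᵀ * Matrix.diagonal D) *ᵥ u) ≤ 0 := by
    have e1 : u ⬝ᵥ ((Matrix.diagonal D * M) *ᵥ u)
        = ∑ i, D i * (u i * (M *ᵥ u) i) := by
      rw [← Matrix.mulVec_mulVec]
      simp only [dotProduct, Matrix.mulVec_diagonal]
      exact Finset.sum_congr rfl fun i _ => by ring
    have e2 : u ⬝ᵥ ((Mᵀ * Matrix.diagonal D) *ᵥ u)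
        = ∑ i, D i * (u i * (M *ᵥ u) i) := by
      rw [← Matrix.mulVec_mulVec, Matrix.dotProduct_mulVec, Matrix.vecMul_transpose]
      simp only [dotProduct, Matrix.mulVec_diagonal]
      exact Finset.sum_congr rfl fun i _ => by ring
    rw [Matrix.add_mulVec, dotProduct_add, e1, e2]
    have : ∀ i ∈ Finset.univ, D i * (u i * (M *ᵥ u) i) ≤ 0 := fun i _ =>
      mul_nonpos_of_nonneg_of_nonpos (hD i).le (hterm i)
    have hs := Finset.sum_nonpos this
    linarith
  have hpos' := hpos.dotProduct_mulVec_pos hune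
  simp only [star_trivial] at hpos'
  linarith
end

section
/- If M is a real N×N matrix with M + M^T positive definite, then for every q ∈ R^N the linear complementarity problem LCP(M,q) admits a unique solution. -/
open Matrix Finset

private lemma lcp_quad_smul {N : ℕ} (A : Matrix (Fin N) (Fin N) ℝ) (r : ℝ) (x : Fin N → ℝ) :
    (r • x) ⬝ᵥ A *ᵥ (r • x) = r^2 * (x ⬝ᵥ A *ᵥ x) := by
  rw [mulVec_smul, smul_dotProduct, dotProduct_smul, smul_eq_mul, smul_eq_mul, sq]; ring

private lemma lcp_coercive {N : ℕ} (M : Matrix (Fin N) (Fin N) ℝ) (hpos : (M + Mᵀ).PosDef) :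
    ∃ μ : ℝ, 0 < μ ∧ ∀ x : Fin N → ℝ, μ * (∑ i, x i ^ 2) ≤ x ⬝ᵥ M.mulVec x := by
  have hsym : ∀ x : Fin N → ℝ, x ⬝ᵥ (M + Mᵀ) *ᵥ x = 2 * (x ⬝ᵥ M *ᵥ x) := by
    intro x
    rw [add_mulVec, dotProduct_add, dotProduct_mulVec x Mᵀ, vecMul_transpose, dotProduct_comm]
    ring
  have hq : ∀ x : Fin N → ℝ, x ≠ 0 → 0 < x ⬝ᵥ (M + Mᵀ) *ᵥ x := by
    intro x hx; simpa using (posDef_iff_dotProduct_mulVec.mp hpos).2 hx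
  rcases Nat.eq_zero_or_pos N with hN | hN
  · refine ⟨1, one_pos, fun x => ?_⟩
    subst hN
    simp [dotProduct]
  · set f : EuclideanSpace ℝ (Fin N) → ℝ := fun x => x ⬝ᵥ (M + Mᵀ) *ᵥ x with hf
    have hcont : Continuous f := by
      simp only [hf, dotProduct, mulVec]
      fun_prop
    have hptmem : (EuclideanSpace.single (⟨0, hN⟩ : Fin N) (1:ℝ)) ∈
        Metric.sphere (0 : EuclideanSpace ℝ (Fin N)) 1 := by
      simp [EuclideanSpace.norm_single]
    obtain ⟨x₀, hx₀, hmin⟩ := (isCompact_sphere (0 : EuclideanSpace ℝ (Fin N)) 1).exists_isMinOn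
      ⟨_, hptmem⟩ hcont.continuousOn
    have hx₀norm : ‖x₀‖ = 1 := by simpa using hx₀
    have hx₀ne : (x₀ : Fin N → ℝ) ≠ 0 := by
      intro h
      have : ‖x₀‖ = 0 := by
        have : x₀ = 0 := by simpa using congrArg (WithLp.toLp 2) h
        simp [this]
      simp [hx₀norm] at this
    have hc : 0 < f x₀ := hq _ hx₀ne
    refine ⟨f x₀ / 2, by positivity, fun x => ?_⟩
    rcases eq_or_ne x 0 with rfl | hx
    · simp
    · set xE : EuclideanSpace ℝ (Fin N) := WithLp.toLp 2 x with hxE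
      have hxEne : xE ≠ 0 := by
        rw [hxE]; intro h; apply hx; simpa using congrArg WithLp.ofLp h
      have hnorm : (0:ℝ) < ‖xE‖ := norm_pos_iff.mpr hxEne
      set r : ℝ := ‖xE‖ with hr
      have humem : (r⁻¹ • xE) ∈ Metric.sphere (0 : EuclideanSpace ℝ (Fin N)) 1 := by
        rw [mem_sphere_zero_iff_norm, norm_smul]
        rw [norm_inv, Real.norm_eq_abs, abs_of_pos hnorm, ← hr, inv_mul_cancel₀ hnorm.ne']
      have hfu : f x₀ ≤ f (r⁻¹ • xE) := hmin humem
      have hscale : f (r⁻¹ • xE) = (r⁻¹)^2 * f xE := lcp_quad_smul _ _ _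
      have hnsq : ∑ i, x i ^ 2 = r ^ 2 := by
        have h1 := EuclideanSpace.norm_eq xE
        have h2 : r = Real.sqrt (∑ i, x i ^ 2) := by rw [hr, h1]; simp [hxE, sq_abs]
        rw [h2, Real.sq_sqrt (by positivity)]
      have key : f x₀ * r ^ 2 ≤ f xE := by
        rw [hscale] at hfu
        have := mul_le_mul_of_nonneg_right hfu (le_of_lt (by positivity : (0:ℝ) < r^2))
        calc f x₀ * r^2 ≤ (r⁻¹)^2 * f xE * r^2 := this
        _ = f xE := by field_simp
      have hfx : f xE = 2 * (x ⬝ᵥ M *ᵥ x) := hsym x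
      rw [hnsq]
      nlinarith [key, hfx]

private lemma lcp_opbound {N : ℕ} (M : Matrix (Fin N) (Fin N) ℝ) :
    ∃ L : ℝ, 0 < L ∧ ∀ x : Fin N → ℝ, ∑ i, (M *ᵥ x) i ^ 2 ≤ L^2 * ∑ i, x i ^ 2 := by
  set C : ℝ := ∑ i, ∑ j, M i j ^ 2 with hC
  have hC0 : 0 ≤ C := by positivity
  refine ⟨Real.sqrt C + 1, by positivity, fun x => ?_⟩
  have hrow : ∀ i, (M *ᵥ x) i ^ 2 ≤ (∑ j, M i j ^ 2) * ∑ j, x j ^ 2 := by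
    intro i
    have := Finset.sum_mul_sq_le_sq_mul_sq Finset.univ (fun j => M i j) x
    simpa [mulVec, dotProduct] using this
  have h1 : ∑ i, (M *ᵥ x) i ^ 2 ≤ C * ∑ j, x j ^ 2 := by
    calc ∑ i, (M *ᵥ x) i ^ 2 ≤ ∑ i, (∑ j, M i j ^ 2) * ∑ j, x j ^ 2 :=
      Finset.sum_le_sum fun i _ => hrow i
    _ = C * ∑ j, x j ^ 2 := by rw [hC, Finset.sum_mul]
  have h2 : C ≤ (Real.sqrt C + 1)^2 := by
    nlinarith [Real.sq_sqrt hC0, Real.sqrt_nonneg C]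
  calc ∑ i, (M *ᵥ x) i ^ 2 ≤ C * ∑ j, x j ^ 2 := h1
  _ ≤ (Real.sqrt C + 1)^2 * ∑ j, x j ^ 2 := mul_le_mul_of_nonneg_right h2 (by positivity)

/-- If `M + Mᵀ` is positive definite, then for every `q` the linear complementarity
problem `LCP(M, q)` admits a unique solution. -/
theorem lcp_exists_unique_of_posDef {N : ℕ} (M : Matrix (Fin N) (Fin N) ℝ)
    (hpos : (M + Mᵀ).PosDef) (q : Fin N → ℝ) :
    ∃! z : Fin N → ℝ, (∀ i, 0 ≤ z i) ∧ (∀ i, 0 ≤ (M.mulVec z + q) i) ∧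
      z ⬝ᵥ (M.mulVec z + q) = 0 := by
  obtain ⟨μ₀, hμ₀, hcoer⟩ := lcp_coercive M hpos
  obtain ⟨L, hL, hLb⟩ := lcp_opbound M
  set μ : ℝ := min μ₀ L with hμdef
  have hμpos : 0 < μ := lt_min hμ₀ hL
  have hμμ₀ : μ ≤ μ₀ := min_le_left _ _
  have hμL : μ ≤ L := min_le_right _ _
  set α : ℝ := μ / L^2 with hα
  have hαpos : 0 < α := by positivity
  set c : ℝ := 1 - μ^2 / L^2 with hcdef
  have hc0 : 0 ≤ c := by
    rw [hcdef]
    have h1 : μ^2 ≤ L^2 := by nlinarith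
    have : μ^2 / L^2 ≤ 1 := by
      rw [div_le_one (by positivity)]; exact h1
    linarith
  have hc1 : c < 1 := by
    rw [hcdef]
    have : 0 < μ^2 / L^2 := by positivity
    linarith
  -- The contraction map
  set T : EuclideanSpace ℝ (Fin N) → EuclideanSpace ℝ (Fin N) :=
    fun z => WithLp.toLp 2 (fun i => max (z i - α * (M *ᵥ z + q) i) 0) with hT
  -- key contraction estimate in squared form
  have hsq : ∀ x y : EuclideanSpace ℝ (Fin N),
      ∑ i, (T x i - T y i)^2 ≤ c * ∑ i, (x i - y i)^2 := by
    intro x y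
    set d : Fin N → ℝ := fun i => x i - y i with hd
    have hMd : ∀ i, (M *ᵥ x + q) i - (M *ᵥ y + q) i = (M *ᵥ d) i := by
      intro i
      have : M *ᵥ d = M *ᵥ x - M *ᵥ y := by
        rw [hd]
        have : (fun i => x i - y i) = (x : Fin N → ℝ) - (y : Fin N → ℝ) := rfl
        rw [this, mulVec_sub]
      rw [this]
      simp
    have step1 : ∀ i, (T x i - T y i)^2 ≤ (d i - α * (M *ᵥ d) i)^2 := by
      intro i
      have habs : |T x i - T y i| ≤ |(x i - α * (M *ᵥ x + q) i) - (y i - α * (M *ᵥ y + q) i)| := by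
        exact abs_max_sub_max_le_abs _ _ _
      have heq : (x i - α * (M *ᵥ x + q) i) - (y i - α * (M *ᵥ y + q) i)
          = d i - α * (M *ᵥ d) i := by
        rw [hd]
        have := hMd i
        simp only
        nlinarith [hMd i]
      rw [heq] at habs
      calc (T x i - T y i)^2 = |T x i - T y i|^2 := (sq_abs _).symm
      _ ≤ |d i - α * (M *ᵥ d) i|^2 := by
          apply pow_le_pow_left₀ (abs_nonneg _) habs
      _ = (d i - α * (M *ᵥ d) i)^2 := sq_abs _
    have expand : ∑ i, (d i - α * (M *ᵥ d) i)^2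
        = ∑ i, d i ^2 - 2 * α * (d ⬝ᵥ M *ᵥ d) + α^2 * ∑ i, (M *ᵥ d) i ^2 := by
      have h1 : ∀ i, (d i - α * (M *ᵥ d) i)^2
          = d i ^2 - 2 * α * (d i * (M *ᵥ d) i) + α^2 * (M *ᵥ d) i ^2 := by
        intro i; ring
      rw [Finset.sum_congr rfl (fun i _ => h1 i)]
      rw [Finset.sum_add_distrib, Finset.sum_sub_distrib, ← Finset.mul_sum, ← Finset.mul_sum]
      rfl
    have hdot : μ * ∑ i, d i ^2 ≤ d ⬝ᵥ M *ᵥ d :=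
      le_trans (mul_le_mul_of_nonneg_right hμμ₀ (by positivity)) (hcoer d)
    have hop := hLb d
    have step2 : ∑ i, (d i - α * (M *ᵥ d) i)^2 ≤ c * ∑ i, d i ^2 := by
      rw [expand]
      have hαval : α = μ / L^2 := rfl
      have hcval : c = 1 - μ^2 / L^2 := rfl
      have hL2 : (0:ℝ) < L^2 := by positivity
      rw [hαval, hcval]
      have e1 : -(2 * (μ / L^2) * (d ⬝ᵥ M *ᵥ d)) ≤ -(2 * (μ / L^2) * (μ * ∑ i, d i ^2)) := by
        apply neg_le_neg
        apply mul_le_mul_of_nonneg_left hdot (by positivity)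
      have e2 : (μ / L^2)^2 * ∑ i, (M *ᵥ d) i ^2 ≤ (μ / L^2)^2 * (L^2 * ∑ i, d i ^2) := by
        apply mul_le_mul_of_nonneg_left hop (by positivity)
      have e3 : (μ / L^2) * μ = μ^2 / L^2 := by rw [sq]; ring
      have e4 : (μ / L^2)^2 * L^2 = μ^2 / L^2 := by
        field_simp
      nlinarith [e1, e2, Finset.sum_nonneg (fun i (_ : i ∈ Finset.univ) => sq_nonneg (d i))]
    exact le_trans (Finset.sum_le_sum fun i (_ : i ∈ Finset.univ) => step1 i) step2
  -- Lipschitz bound in terms of dist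
  have hdist : ∀ x y : EuclideanSpace ℝ (Fin N),
      dist (T x) (T y) ≤ Real.sqrt c * dist x y := by
    intro x y
    have hd1 : dist (T x) (T y) = Real.sqrt (∑ i, (T x i - T y i)^2) := by
      rw [EuclideanSpace.dist_eq]; simp [Real.dist_eq, sq_abs]
    have hd2 : dist x y = Real.sqrt (∑ i, (x i - y i)^2) := by
      rw [EuclideanSpace.dist_eq]; simp [Real.dist_eq, sq_abs]
    rw [hd1, hd2, ← Real.sqrt_mul hc0]
    exact Real.sqrt_le_sqrt (hsq x y)
  set K : NNReal := ⟨Real.sqrt c, Real.sqrt_nonneg c⟩ with hK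
  have hK1 : K < 1 := by
    rw [← NNReal.coe_lt_coe]
    show Real.sqrt c < 1
    have := Real.sqrt_lt_sqrt hc0 hc1
    simpa using this
  have hLip : LipschitzWith K T := LipschitzWith.of_dist_le_mul (fun x y => hdist x y)
  have hcontr : ContractingWith K T := ⟨hK1, hLip⟩
  obtain ⟨z, hzfix, -, -⟩ := hcontr.exists_fixedPoint (0 : EuclideanSpace ℝ (Fin N))
    (edist_ne_top _ _)
  -- properties of the fixed point
  set w : Fin N → ℝ := M *ᵥ z + q with hw
  have hzi : ∀ i, max (z i - α * w i) 0 = z i := fun i => congrFun (congrArg WithLp.ofLp hzfix) i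
  have hz0 : ∀ i, 0 ≤ z i := by
    intro i
    rw [← hzi i]
    exact le_max_right _ _
  have hkey : ∀ i, 0 ≤ w i ∧ z i * w i = 0 := by
    intro i
    rcases le_or_gt (z i - α * w i) 0 with h | h
    · have hz : z i = 0 := by
        rw [← hzi i, max_eq_right h]
      constructor
      · rw [hz] at h
        simp only [zero_sub, neg_nonpos] at h
        exact nonneg_of_mul_nonneg_right h hαpos
      · rw [hz]; ring
    · have hz : z i - α * w i = z i := by
        have h' := hzi i
        rwa [max_eq_left (le_of_lt h)] at h'
      have hwi : w i = 0 := by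
        have : α * w i = 0 := by linarith
        rcases mul_eq_zero.mp this with h' | h'
        · exact absurd h' hαpos.ne'
        · exact h'
      exact ⟨le_of_eq hwi.symm, by rw [hwi]; ring⟩
  have hw0 : ∀ i, 0 ≤ w i := fun i => (hkey i).1
  have hdotz : z ⬝ᵥ w = 0 := Finset.sum_eq_zero fun i _ => (hkey i).2
  -- uniqueness helper
  have huniq : ∀ y₁ y₂ : Fin N → ℝ,
      ((∀ i, 0 ≤ y₁ i) ∧ (∀ i, 0 ≤ (M *ᵥ y₁ + q) i) ∧ y₁ ⬝ᵥ (M *ᵥ y₁ + q) = 0) →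
      ((∀ i, 0 ≤ y₂ i) ∧ (∀ i, 0 ≤ (M *ᵥ y₂ + q) i) ∧ y₂ ⬝ᵥ (M *ᵥ y₂ + q) = 0) →
      y₁ = y₂ := by
    rintro y₁ y₂ ⟨h10, h1w, h1d⟩ ⟨h20, h2w, h2d⟩
    set w₁ : Fin N → ℝ := M *ᵥ y₁ + q with hw₁
    set w₂ : Fin N → ℝ := M *ᵥ y₂ + q with hw₂
    have hcross1 : 0 ≤ y₁ ⬝ᵥ w₂ := Finset.sum_nonneg fun i _ => mul_nonneg (h10 i) (h2w i)
    have hcross2 : 0 ≤ y₂ ⬝ᵥ w₁ := Finset.sum_nonneg fun i _ => mul_nonneg (h20 i) (h1w i)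
    have hMd : M *ᵥ (y₁ - y₂) = w₁ - w₂ := by
      rw [mulVec_sub, hw₁, hw₂]
      abel
    have hquad : (y₁ - y₂) ⬝ᵥ M *ᵥ (y₁ - y₂) ≤ 0 := by
      rw [hMd, sub_dotProduct, dotProduct_sub, dotProduct_sub, h1d, h2d]
      linarith
    have hcz := hcoer (y₁ - y₂)
    have hsum : ∑ i, (y₁ - y₂) i ^ 2 ≤ 0 := by
      nlinarith [hcz, hquad]
    have hsum0 : ∑ i, (y₁ - y₂) i ^ 2 = 0 :=
      le_antisymm hsum (Finset.sum_nonneg fun i _ => sq_nonneg _)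
    funext i
    have := (Finset.sum_eq_zero_iff_of_nonneg
      (fun i (_ : i ∈ Finset.univ) => sq_nonneg ((y₁ - y₂) i))).mp hsum0 i (Finset.mem_univ i)
    have h0 : y₁ i - y₂ i = 0 := by
      have := sq_eq_zero_iff.mp this
      simpa using this
    linarith
  exact ⟨z, ⟨hz0, hw0, hdotz⟩, fun y hy => huniq y z hy ⟨hz0, hw0, hdotz⟩⟩
end

section
/- Let x* be a stable (Lyapunov stable) nonnegative equilibrium of the system dx_i/dt = x_i φ_i(x) with all φ_i continuous. Then φ_i(x*) ≤ 0 for all i. -/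
open Set Filter Metric intervalIntegral Topology

set_option maxHeartbeats 1000000
set_option synthInstance.maxHeartbeats 200000

variable {N : ℕ}



lemma lip_approx_scalar (f : (Fin N → ℝ) → ℝ) (hf : Continuous f) {M : ℝ}
    (hM : ∀ y, |f y| ≤ M) {K : Set (Fin N → ℝ)} (hK : IsCompact K) (hKne : K.Nonempty)
    {ε : ℝ} (hε : 0 < ε) :
    ∃ g : (Fin N → ℝ) → ℝ, (∃ L : NNReal, LipschitzWith L g) ∧ (∀ y, |g y| ≤ M) ∧
      ∀ y ∈ K, |g y - f y| ≤ ε := by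
  have hM0 : 0 ≤ M := le_trans (abs_nonneg _) (hM (fun _ => 0))
  obtain ⟨δ, hδ, hδ'⟩ := Metric.uniformContinuousOn_iff.mp
    (hK.uniformContinuousOn_of_continuous hf.continuousOn) ε hε
  set n : ℝ := 2 * M / δ + 1 with hn
  have hn0 : 0 < n := by positivity
  set g0 : (Fin N → ℝ) → ℝ := fun y => sInf ((fun z => f z + n * dist y z) '' K) with hg0
  have hbdd : ∀ y, BddBelow ((fun z => f z + n * dist y z) '' K) := by
    intro y
    refine ⟨-M, ?_⟩
    rintro w ⟨z, hz, rfl⟩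
    dsimp only
    have h1 : -M ≤ f z := (abs_le.mp (hM z)).1
    nlinarith [dist_nonneg (x := y) (y := z)]
  have hne : ∀ y, ((fun z => f z + n * dist y z) '' K).Nonempty := fun y => hKne.image _
  have hg0le : ∀ y ∈ K, g0 y ≤ f y := by
    intro y hy
    have h := csInf_le (hbdd y) (mem_image_of_mem _ hy)
    simpa using h
  have hg0ge : ∀ y, -M ≤ g0 y := by
    intro y
    apply le_csInf (hne y)
    rintro w ⟨z, hz, rfl⟩
    dsimp only
    have h1 : -M ≤ f z := (abs_le.mp (hM z)).1
    nlinarith [dist_nonneg (x := y) (y := z)]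
  have key : ∀ a b : Fin N → ℝ, g0 a - n * dist a b ≤ g0 b := by
    intro a b
    apply le_csInf (hne b)
    rintro w ⟨z, hz, rfl⟩
    dsimp only
    have h1 : g0 a ≤ f z + n * dist a z := csInf_le (hbdd a) (mem_image_of_mem _ hz)
    have h2 : dist a z ≤ dist a b + dist b z := dist_triangle a b z
    nlinarith
  have hg0lip : LipschitzWith ⟨n, hn0.le⟩ g0 := by
    apply LipschitzWith.of_dist_le_mul
    intro y y'
    rw [Real.dist_eq, abs_le]
    have h1 := key y y'
    have h2 := key y' y
    rw [dist_comm y' y] at h2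
    constructor <;> simp only [show NNReal.toReal ⟨n, hn0.le⟩ = n from rfl] <;> linarith
  have hg0app : ∀ y ∈ K, f y - ε ≤ g0 y := by
    intro y hy
    apply le_csInf (hne y)
    rintro w ⟨z, hz, rfl⟩
    dsimp only
    rcases lt_or_ge (dist y z) δ with h | h
    · have h0 := hδ' y hy z hz h
      rw [Real.dist_eq, abs_lt] at h0
      nlinarith [dist_nonneg (x := y) (y := z), hn0]
    · have h1 := (abs_le.mp (hM y)).2
      have h2 := (abs_le.mp (hM z)).1
      have h3 : n * δ ≤ n * dist y z := mul_le_mul_of_nonneg_left h hn0.le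
      have hnd : 2 * M ≤ n * δ := by
        rw [hn]
        have : (2 * M / δ + 1) * δ = 2 * M + δ := by field_simp
        rw [this]; linarith
      nlinarith
  refine ⟨fun y => max (-M) (min M (g0 y)), ⟨⟨n, hn0.le⟩, by
      simpa using (hg0lip.const_min M).const_max (-M)⟩, ?_, ?_⟩
  · intro y
    rw [abs_le]
    exact ⟨le_max_left _ _, max_le (by linarith) (min_le_left _ _)⟩
  · intro y hy
    have h1 := hg0le y hy
    have h2 := hg0app y hy
    have h3 := (abs_le.mp (hM y)).1
    have h4 := (abs_le.mp (hM y)).2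
    rw [abs_le]
    rcases le_total M (g0 y) with h | h <;> rcases le_total (g0 y) (-M) with h' | h' <;>
      rcases max_cases (-M) (min M (g0 y)) with hm | hm <;>
      rcases min_cases M (g0 y) with hm' | hm' <;>
      constructor <;> linarith [hm.1, hm.2, hm'.1, hm'.2]





lemma lip_approx_vector (F : (Fin N → ℝ) → (Fin N → ℝ)) (hF : Continuous F) {M : ℝ}
    (hM0 : 0 ≤ M) (hM : ∀ y, ‖F y‖ ≤ M) {K : Set (Fin N → ℝ)} (hK : IsCompact K)
    (hKne : K.Nonempty) {ε : ℝ} (hε : 0 < ε) :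
    ∃ G : (Fin N → ℝ) → (Fin N → ℝ), (∃ L : NNReal, LipschitzWith L G) ∧
      (∀ y, ‖G y‖ ≤ M) ∧ ∀ y ∈ K, ‖G y - F y‖ ≤ ε := by
  have hcomp : ∀ i : Fin N, ∃ g : (Fin N → ℝ) → ℝ,
      (∃ L : NNReal, LipschitzWith L g) ∧ (∀ y, |g y| ≤ M) ∧ ∀ y ∈ K, |g y - F y i| ≤ ε := by
    intro i
    apply lip_approx_scalar (fun y => F y i)
      ((continuous_apply i).comp hF)
      (fun y => le_trans (by simpa using norm_le_pi_norm (F y) i) (hM y)) hK hKne hε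
  choose g hg hgb hga using hcomp
  choose L hL using hg
  set G : (Fin N → ℝ) → (Fin N → ℝ) := fun y i => g i y with hG
  set L0 : NNReal := Finset.univ.sup L with hL0
  refine ⟨G, ⟨L0, ?_⟩, ?_, ?_⟩
  · apply LipschitzWith.of_dist_le_mul
    intro y y'
    rcases Nat.eq_zero_or_pos N with h | h
    · subst h
      have : dist (G y) (G y') = 0 := by
        simp [dist_pi_def]
      rw [this]
      positivity
    · apply dist_pi_le_iff (by positivity) |>.2
      intro i
      calc dist (g i y) (g i y') ≤ L i * dist y y' := (hL i).dist_le_mul y y'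
        _ ≤ L0 * dist y y' := by
            apply mul_le_mul_of_nonneg_right _ dist_nonneg
            exact_mod_cast NNReal.coe_le_coe.2 (Finset.le_sup (Finset.mem_univ i))
  · intro y
    apply pi_norm_le_iff_of_nonneg hM0 |>.2
    intro i
    simpa [Real.norm_eq_abs] using hgb i y
  · intro y hy
    apply pi_norm_le_iff_of_nonneg hε.le |>.2
    intro i
    simpa [Real.norm_eq_abs] using hga i y hy






/-- Peano existence theorem for bounded continuous vector fields on `ℝ^N`,
on an arbitrary time interval `[0, T]`, with two-sided derivatives. -/
lemma peano (F : (Fin N → ℝ) → (Fin N → ℝ)) (hF : Continuous F) {M T : ℝ}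
    (hM0 : 0 ≤ M) (hM : ∀ y, ‖F y‖ ≤ M) (p : Fin N → ℝ) (hT : 0 < T) :
    ∃ x : ℝ → (Fin N → ℝ), Continuous x ∧ x 0 = p ∧
      ∀ t ∈ Icc (0:ℝ) T, HasDerivAt x (F (x t)) t := by
  classical
  set K : Set (Fin N → ℝ) := closedBall p (M * T) with hK
  have hKc : IsCompact K := isCompact_closedBall p (M * T)
  have hKne : K.Nonempty := ⟨p, mem_closedBall_self (by positivity)⟩
  -- Lipschitz approximations
  have happrox : ∀ n : ℕ, ∃ G : (Fin N → ℝ) → (Fin N → ℝ),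
      (∃ L : NNReal, LipschitzWith L G) ∧ (∀ y, ‖G y‖ ≤ M) ∧
      ∀ y ∈ K, ‖G y - F y‖ ≤ 1 / (n + 1) :=
    fun n => lip_approx_vector F hF hM0 hM hKc hKne (by positivity)
  choose G hGlip hGb hGa using happrox
  choose L hL using hGlip
  -- Picard-Lindelöf solutions
  have hsol : ∀ n : ℕ, ∃ f : ℝ → (Fin N → ℝ), f 0 = p ∧
      ∀ t ∈ Icc (0:ℝ) T, HasDerivWithinAt f (G n (f t)) (Icc (0:ℝ) T) t := by
    intro n
    obtain ⟨α, hα0, hα⟩ := IsPicardLindelof.exists_eq_forall_mem_Icc_hasDerivWithinAt₀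
      (f := fun _ => G n) (tmin := 0) (tmax := T) (t₀ := ⟨0, le_refl 0, hT.le⟩) (x₀ := p)
      (a := (M * T).toNNReal) (L := M.toNNReal) (K := L n)
      (IsPicardLindelof.of_time_independent
        (fun x _ => (hGb n x).trans (Real.le_coe_toNNReal M)) ((hL n).lipschitzOnWith)
        (by simp [Real.coe_toNNReal _ hM0, Real.coe_toNNReal _ (mul_nonneg hM0 hT.le), hT.le]))
    exact ⟨α, hα0, hα⟩
  choose f hf0 hfd using hsol
  -- each f n is M-Lipschitz on [0, T]
  have hlip : ∀ n, LipschitzOnWith M.toNNReal (f n) (Icc (0:ℝ) T) := by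
    intro n
    apply (convex_Icc (0:ℝ) T).lipschitzOnWith_of_nnnorm_hasDerivWithin_le
      (f' := fun t => G n (f n t)) (fun t ht => hfd n t ht)
    intro t _
    rw [← NNReal.coe_le_coe, coe_nnnorm, Real.coe_toNNReal _ hM0]
    exact hGb n (f n t)
  have hmem : ∀ n, ∀ t ∈ Icc (0:ℝ) T, f n t ∈ K := by
    intro n t ht
    have h0 : (0:ℝ) ∈ Icc (0:ℝ) T := ⟨le_refl 0, hT.le⟩
    have := (hlip n).dist_le_mul t ht 0 h0
    rw [hf0 n] at this
    rw [hK, mem_closedBall]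
    refine le_trans this ?_
    rw [Real.coe_toNNReal _ hM0, Real.dist_eq, sub_zero, abs_of_nonneg ht.1]
    exact mul_le_mul_of_nonneg_left ht.2 hM0
  -- bundle into bounded continuous functions on the compact interval
  haveI : CompactSpace (Icc (0:ℝ) T) := isCompact_iff_compactSpace.mp isCompact_Icc
  set u : ℕ → BoundedContinuousFunction (Icc (0:ℝ) T) (Fin N → ℝ) := fun n =>
    BoundedContinuousFunction.mkOfCompact ⟨fun a => f n a, ((hlip n).continuousOn).restrict⟩
    with hu
  have hueval : ∀ n (a : Icc (0:ℝ) T), u n a = f n a := fun n a => rfl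
  -- Arzelà–Ascoli
  have hAA : IsCompact (closure (Set.range u)) := by
    apply BoundedContinuousFunction.arzela_ascoli K hKc
    · rintro v a ⟨n, rfl⟩
      exact hmem n a a.2
    · intro a₀
      rw [Metric.equicontinuousAt_iff]
      intro ε hε
      refine ⟨ε / (M + 1), by positivity, ?_⟩
      rintro a ha ⟨v, n, rfl⟩
      have h1 : dist (f n a₀) (f n a) ≤ M * dist (a₀ : ℝ) a := by
        have := (hlip n).dist_le_mul a₀ a₀.2 a a.2
        rwa [Real.coe_toNNReal _ hM0] at this
      have h2 : dist (a₀ : ℝ) a < ε / (M + 1) := by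
        rw [Subtype.dist_eq, dist_comm] at ha
        exact ha
      calc dist (u n a₀) (u n a) ≤ M * dist (a₀ : ℝ) a := h1
        _ ≤ M * (ε / (M + 1)) := mul_le_mul_of_nonneg_left h2.le hM0
        _ < ε := by
          have h := (div_lt_one (show (0:ℝ) < M + 1 by linarith)).2
            (by linarith : M < M + 1)
          calc M * (ε / (M + 1)) = M / (M + 1) * ε := by ring
            _ < 1 * ε := mul_lt_mul_of_pos_right h hε
            _ = ε := one_mul ε
  obtain ⟨w, hwA, ψ, hψm, hψt⟩ := hAA.tendsto_subseq (fun n => subset_closure ⟨n, rfl⟩)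
  have hpt : ∀ a : Icc (0:ℝ) T, Tendsto (fun k => f (ψ k) a) atTop (𝓝 (w a)) := by
    intro a
    exact ((BoundedContinuousFunction.lipschitz_eval_const a).continuous.tendsto w).comp hψt
  have hwK : ∀ a : Icc (0:ℝ) T, w a ∈ K :=
    fun a => (Metric.isClosed_closedBall (x := p) (ε := M * T)).mem_of_tendsto (hpt a)
      (Eventually.of_forall fun k => hmem _ _ a.2)
  set Y : ℝ → (Fin N → ℝ) := fun s => w (projIcc 0 T hT.le s) with hY
  have hYc : Continuous Y := w.continuous.comp continuous_projIcc
  have hYIcc : ∀ t (ht : t ∈ Icc (0:ℝ) T), Y t = w ⟨t, ht⟩ := by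
    intro t ht
    rw [hY]
    simp [projIcc_of_mem hT.le ht]
  have hYK : ∀ s : ℝ, Y s ∈ K := fun s => hwK _
  -- integral equation for the approximate solutions
  have hInt : ∀ n, ∀ t ∈ Icc (0:ℝ) T, f n t = p + ∫ s in (0:ℝ)..t, G n (f n s) := by
    intro n t ht
    have h0t : (0:ℝ) ≤ t := ht.1
    have hco : ContinuousOn (f n) (Icc 0 t) :=
      (hlip n).continuousOn.mono (Icc_subset_Icc le_rfl ht.2)
    have hderiv : ∀ s ∈ Ioo (0:ℝ) t, HasDerivWithinAt (f n) (G n (f n s)) (Ioi s) s := by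
      intro s hs
      have hsT : s ∈ Icc (0:ℝ) T := ⟨hs.1.le, hs.2.le.trans ht.2⟩
      apply (hfd n s hsT).mono_of_mem_nhdsWithin
      apply mem_nhdsWithin.2
      refine ⟨Iio T, isOpen_Iio, lt_of_lt_of_le hs.2 ht.2, ?_⟩
      rintro y ⟨hy1, hy2⟩
      exact ⟨(hs.1.trans hy2).le, hy1.le⟩
    have hcG : ContinuousOn (fun s => G n (f n s)) (Icc 0 t) :=
      (hL n).continuous.comp_continuousOn hco
    have hint : IntervalIntegrable (fun s => G n (f n s)) MeasureTheory.volume 0 t := by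
      apply ContinuousOn.intervalIntegrable
      rwa [uIcc_of_le h0t]
    have heq := integral_eq_sub_of_hasDeriv_right_of_le h0t hco hderiv hint
    rw [hf0 n] at heq
    rw [heq]
    abel
  -- pass to the limit in the integral equation
  have hYeq : ∀ t ∈ Icc (0:ℝ) T, Y t = p + ∫ s in (0:ℝ)..t, F (Y s) := by
    intro t ht
    have h0t : (0:ℝ) ≤ t := ht.1
    have h1 : Tendsto (fun k => f (ψ k) t) atTop (𝓝 (Y t)) := by
      rw [hYIcc t ht]
      exact hpt ⟨t, ht⟩
    have hFYcont : Continuous (fun s => F (Y s)) := hF.comp hYc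
    have hintY : IntervalIntegrable (fun s => F (Y s)) MeasureTheory.volume 0 t :=
      hFYcont.intervalIntegrable 0 t
    have h2 : Tendsto (fun k => p + ∫ s in (0:ℝ)..t, G (ψ k) (f (ψ k) s)) atTop
        (𝓝 (p + ∫ s in (0:ℝ)..t, F (Y s))) := by
      apply Tendsto.const_add
      rw [Metric.tendsto_atTop]
      intro ε hε
      set ε' : ℝ := ε / (2 * (T + 1)) with hε'
      have hε'pos : 0 < ε' := by positivity
      obtain ⟨δ, hδpos, hδ⟩ := Metric.uniformContinuousOn_iff.mp
        (hKc.uniformContinuousOn_of_continuous hF.continuousOn) ε' hε'pos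
      obtain ⟨N₁, hN₁⟩ := Metric.tendsto_atTop.mp hψt δ hδpos
      obtain ⟨N₂, hN₂⟩ := exists_nat_gt (1 / ε')
      refine ⟨max N₁ N₂, fun k hk => ?_⟩
      have hk1 : N₁ ≤ k := le_trans (le_max_left _ _) hk
      have hk2 : N₂ ≤ k := le_trans (le_max_right _ _) hk
      have hsmall : 1 / ((ψ k : ℝ) + 1) ≤ ε' := by
        have hψk : (k : ℝ) ≤ ψ k := by exact_mod_cast hψm.le_apply
        have hN2k : (N₂ : ℝ) ≤ k := by exact_mod_cast hk2
        rw [div_le_iff₀ (by positivity)]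
        rw [div_lt_iff₀ hε'pos] at hN₂
        nlinarith [hε'pos]
      have hintG : IntervalIntegrable (fun s => G (ψ k) (f (ψ k) s))
          MeasureTheory.volume 0 t := by
        apply ContinuousOn.intervalIntegrable
        rw [uIcc_of_le h0t]
        exact (hL (ψ k)).continuous.comp_continuousOn
          ((hlip (ψ k)).continuousOn.mono (Icc_subset_Icc le_rfl ht.2))
      rw [dist_eq_norm, ← integral_sub hintG hintY]
      have hbound : ∀ s ∈ Set.uIoc (0:ℝ) t,
          ‖G (ψ k) (f (ψ k) s) - F (Y s)‖ ≤ 2 * ε' := by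
        intro s hs
        rw [uIoc_of_le h0t] at hs
        have hsT : s ∈ Icc (0:ℝ) T := ⟨hs.1.le, hs.2.trans ht.2⟩
        have hfK : f (ψ k) s ∈ K := hmem _ _ hsT
        have hYsK : Y s ∈ K := hYK s
        have hd1 : ‖G (ψ k) (f (ψ k) s) - F (f (ψ k) s)‖ ≤ 1 / ((ψ k : ℝ) + 1) := by
          have := hGa (ψ k) (f (ψ k) s) hfK
          exact_mod_cast this
        have hd2 : dist (F (f (ψ k) s)) (F (Y s)) < ε' := by
          apply hδ _ hfK _ hYsK
          have : dist (f (ψ k) s) (Y s) ≤ dist (u (ψ k)) w := by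
            rw [hYIcc s hsT]
            exact BoundedContinuousFunction.dist_coe_le_dist
              (f := u (ψ k)) (g := w) (⟨s, hsT⟩ : Icc (0:ℝ) T)
          exact lt_of_le_of_lt this (hN₁ k hk1)
        calc ‖G (ψ k) (f (ψ k) s) - F (Y s)‖
            ≤ ‖G (ψ k) (f (ψ k) s) - F (f (ψ k) s)‖ + ‖F (f (ψ k) s) - F (Y s)‖ := by
              have : G (ψ k) (f (ψ k) s) - F (Y s) =
                (G (ψ k) (f (ψ k) s) - F (f (ψ k) s)) + (F (f (ψ k) s) - F (Y s)) := by abel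
              rw [this]; exact norm_add_le _ _
          _ ≤ 1 / ((ψ k : ℝ) + 1) + ε' := by
              rw [← dist_eq_norm]
              exact add_le_add hd1 hd2.le
          _ ≤ 2 * ε' := by linarith
      have hnorm := intervalIntegral.norm_integral_le_of_norm_le_const hbound
      refine lt_of_le_of_lt hnorm ?_
      rw [sub_zero, abs_of_nonneg h0t]
      have h1 : t ≤ T := ht.2
      have hT1 : (0:ℝ) < T + 1 := by linarith
      calc 2 * ε' * t ≤ 2 * ε' * T := by nlinarith [hε'pos]
        _ = ε * T / (T + 1) := by rw [hε']; field_simp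
        _ < ε := by rw [div_lt_iff₀ (by linarith : (0:ℝ) < T + 1)]; nlinarith
    have hfun : (fun k => f (ψ k) t) =
        (fun k => p + ∫ s in (0:ℝ)..t, G (ψ k) (f (ψ k) s)) := by
      funext k
      exact hInt (ψ k) t ht
    rw [hfun] at h1
    exact tendsto_nhds_unique h1 h2
  -- the limit function
  refine ⟨fun r => p + ∫ s in (0:ℝ)..r, F (Y s), ?_, ?_, ?_⟩
  · apply continuous_iff_continuousAt.2
    intro r
    have hFYcont : Continuous (fun s => F (Y s)) := hF.comp hYc
    exact ((intervalIntegral.integral_hasDerivAt_right (hFYcont.intervalIntegrable 0 r)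
      (hFYcont.stronglyMeasurable.stronglyMeasurableAtFilter)
      hFYcont.continuousAt).const_add p).continuousAt
  · simp
  · intro t ht
    have hFYcont : Continuous (fun s => F (Y s)) := hF.comp hYc
    have hd := (intervalIntegral.integral_hasDerivAt_right (hFYcont.intervalIntegrable 0 t)
      (hFYcont.stronglyMeasurable.stronglyMeasurableAtFilter)
      hFYcont.continuousAt).const_add p
    have hxY : p + ∫ s in (0:ℝ)..t, F (Y s) = Y t := (hYeq t ht).symm
    simp only [hxY]
    exact hd





/-- If `x*` is a Lyapunov-stable nonnegative equilibrium of `dx_i/dt = x_i φ_i(x)`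
with all `φ_i` continuous, then `φ_i(x*) ≤ 0` for all `i`. -/
theorem fitness_nonpos_of_stable {N : ℕ} (φ : Fin N → (Fin N → ℝ) → ℝ)
    (hφ : ∀ i, Continuous (φ i)) (xs : Fin N → ℝ)
    (hnonneg : ∀ i, 0 ≤ xs i)
    (hequi : ∀ i, xs i * φ i xs = 0)
    (hstable : ∀ U ∈ nhds xs, ∃ W ∈ nhds xs,
      ∀ T > (0 : ℝ), ∀ x : ℝ → Fin N → ℝ,
        (∀ t ∈ Ico (0 : ℝ) T, ∀ i,
          HasDerivAt (fun s => x s i) (x t i * φ i (x t)) t) →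
        x 0 ∈ W → (∀ i, 0 < x 0 i) → ∀ t ∈ Ico (0 : ℝ) T, x t ∈ U) :
    ∀ i, φ i xs ≤ 0 := by
  intro i
  by_contra hneg
  push_neg at hneg
  set c : ℝ := φ i xs with hc
  have hc0 : 0 < c := hneg
  have hxsi : xs i = 0 := by
    rcases mul_eq_zero.mp (hequi i) with h | h
    · exact h
    · exfalso; rw [← hc] at h; linarith
  -- radius R on which φ i ≥ c/2
  have hopen : {y : Fin N → ℝ | c / 2 < φ i y} ∈ nhds xs := by
    apply (hφ i).continuousAt.preimage_mem_nhds
    exact Ioi_mem_nhds (by linarith)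
  obtain ⟨R0, hR0pos, hR0⟩ := Metric.mem_nhds_iff.mp hopen
  set R : ℝ := R0 / 2 with hR
  have hRpos : 0 < R := by positivity
  have hφR : ∀ y ∈ closedBall xs R, c / 2 ≤ φ i y := by
    intro y hy
    have : y ∈ ball xs R0 := by
      rw [mem_ball]; rw [mem_closedBall] at hy
      linarith
    exact (hR0 this).le
  -- the retraction onto the closed ball
  set ρ : (Fin N → ℝ) → (Fin N → ℝ) :=
    fun y => xs + min 1 (R / ‖y - xs‖) • (y - xs) with hρ
  have hρ_id : ∀ y, dist y xs < R → ρ y = y := by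
    intro y hy
    rcases eq_or_ne y xs with h | h
    · subst h; simp [hρ]
    · have hn : 0 < ‖y - xs‖ := by
        rw [norm_pos_iff, sub_ne_zero]; exact h
      have h1 : (1:ℝ) ≤ R / ‖y - xs‖ := by
        rw [le_div_iff₀ hn, one_mul, ← dist_eq_norm]
        exact hy.le
      rw [hρ]
      simp only [min_eq_left h1, one_smul]
      abel
  have hρ_mem : ∀ y, ρ y ∈ closedBall xs R := by
    intro y
    rw [mem_closedBall, hρ]
    rcases eq_or_ne y xs with h | h
    · subst h; simp [hRpos.le]
    · have hn : 0 < ‖y - xs‖ := by rw [norm_pos_iff, sub_ne_zero]; exact h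
      have hmin0 : 0 ≤ min 1 (R / ‖y - xs‖) := le_min zero_le_one (by positivity)
      have : dist (xs + min 1 (R / ‖y - xs‖) • (y - xs)) xs
          = min 1 (R / ‖y - xs‖) * ‖y - xs‖ := by
        rw [dist_eq_norm]
        have : xs + min 1 (R / ‖y - xs‖) • (y - xs) - xs = min 1 (R / ‖y - xs‖) • (y - xs) := by
          abel
        rw [this, norm_smul, Real.norm_of_nonneg hmin0]
      rw [this]
      calc min 1 (R / ‖y - xs‖) * ‖y - xs‖ ≤ (R / ‖y - xs‖) * ‖y - xs‖ :=
            mul_le_mul_of_nonneg_right (min_le_right _ _) hn.le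
        _ = R := by field_simp
  have hρ_cont : Continuous ρ := by
    rw [continuous_iff_continuousAt]
    intro y
    rcases eq_or_ne y xs with h | h
    · rw [h]
      apply ContinuousAt.congr continuousAt_id
      filter_upwards [ball_mem_nhds xs hRpos] with z hz
      exact (hρ_id z (mem_ball.mp hz)).symm
    · have hn : ‖y - xs‖ ≠ 0 := by
        rw [norm_ne_zero_iff, sub_ne_zero]; exact h
      apply ContinuousAt.add continuousAt_const
      apply ContinuousAt.fun_smul
      · exact (continuousAt_const.min (continuousAt_const.div
          ((continuous_norm.comp (continuous_id.sub continuous_const)).continuousAt) hn))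
      · exact (continuous_id.sub continuous_const).continuousAt
  -- the modified vector field
  set Ftrue : (Fin N → ℝ) → (Fin N → ℝ) := fun y => fun j => y j * φ j y with hFtrue
  have hFtrue_cont : Continuous Ftrue := by
    apply continuous_pi
    intro j
    exact (continuous_apply j).mul (hφ j)
  obtain ⟨M, hM⟩ := (isCompact_closedBall xs R).exists_bound_of_continuousOn
    hFtrue_cont.continuousOn
  have hM0 : 0 ≤ M := le_trans (norm_nonneg _) (hM xs (mem_closedBall_self hRpos.le))
  set Fhat : (Fin N → ℝ) → (Fin N → ℝ) := fun y => Ftrue (ρ y) with hFhat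
  have hFhat_cont : Continuous Fhat := hFtrue_cont.comp hρ_cont
  have hFhat_bd : ∀ y, ‖Fhat y‖ ≤ M := fun y => hM _ (hρ_mem y)
  -- apply stability with U = ball xs (R/2)
  obtain ⟨W, hW, hWs⟩ := hstable (ball xs (R / 2)) (ball_mem_nhds xs (by positivity))
  obtain ⟨δ0, hδ0pos, hδ0⟩ := Metric.mem_nhds_iff.mp hW
  set δ : ℝ := min δ0 R / 2 with hδ
  have hδpos : 0 < δ := by
    rw [hδ]; positivity
  have hδltδ0 : δ < δ0 := by
    rw [hδ]
    have : min δ0 R ≤ δ0 := min_le_left _ _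
    linarith
  have hδleR : δ < R := by
    rw [hδ]
    have : min δ0 R ≤ R := min_le_right _ _
    linarith
  set p : Fin N → ℝ := fun j => xs j + δ with hp
  have hdistp : dist p xs ≤ δ := by
    apply dist_pi_le_iff hδpos.le |>.2
    intro j
    rw [hp, Real.dist_eq]
    simp [abs_of_nonneg hδpos.le]
  have hpW : p ∈ W := hδ0 (by rw [mem_ball]; linarith)
  have hppos : ∀ j, 0 < p j := fun j => by
    rw [hp]; have := hnonneg j; dsimp; linarith
  set tstar : ℝ := 2 / c * Real.log (R / δ) with htstar
  have hRδ : 1 ≤ R / δ := by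
    rw [le_div_iff₀ hδpos, one_mul]; exact hδleR.le
  have htstar0 : 0 ≤ tstar := by
    rw [htstar]
    have := Real.log_nonneg hRδ
    positivity
  set T : ℝ := tstar + 1 with hT
  have hTpos : 0 < T := by rw [hT]; linarith
  -- Peano solution
  obtain ⟨x, hxc, hx0, hxd⟩ := peano Fhat hFhat_cont hM0 hFhat_bd p hTpos
  -- ODE in true form while inside the ball
  have hODE : ∀ t ∈ Icc (0:ℝ) T, dist (x t) xs < R →
      ∀ j, HasDerivAt (fun s => x s j) (x t j * φ j (x t)) t := by
    intro t ht hdist j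
    have hd := hxd t ht
    have : Fhat (x t) = Ftrue (x t) := by
      simp only [hFhat]
      rw [hρ_id _ hdist]
    rw [this] at hd
    exact (hasDerivAt_pi.mp hd) j
  -- case analysis on whether x exits the ball of radius R
  set A : Set ℝ := Icc (0:ℝ) T ∩ {t : ℝ | R ≤ dist (x t) xs} with hA
  have hdistx0 : dist (x 0) xs < R := by rw [hx0]; linarith [hdistp]
  rcases eq_empty_or_nonempty A with hAe | hAne
  · -- the solution stays in the ball: apply stability on [0, T), get contradiction via growth
    have hin : ∀ t ∈ Icc (0:ℝ) T, dist (x t) xs < R := by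
      intro t ht
      by_contra hcon
      push_neg at hcon
      have htA : t ∈ A := ⟨ht, hcon⟩
      rw [hAe] at htA
      exact htA
    have hODE' : ∀ t ∈ Ico (0:ℝ) T, ∀ j,
        HasDerivAt (fun s => x s j) (x t j * φ j (x t)) t := by
      intro t ht
      exact hODE t ⟨ht.1, ht.2.le⟩ (hin t ⟨ht.1, ht.2.le⟩)
    have hstay := hWs T hTpos x hODE' (by rw [hx0]; exact hpW)
      (by rw [hx0]; exact hppos)
    -- exponential growth of coordinate i
    set I : ℝ → ℝ := fun t => ∫ s in (0:ℝ)..t, φ i (x s) with hI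
    have hIcont : Continuous (fun s => φ i (x s)) := (hφ i).comp hxc
    have hId : ∀ t : ℝ, HasDerivAt I (φ i (x t)) t := by
      intro t
      exact intervalIntegral.integral_hasDerivAt_right (hIcont.intervalIntegrable 0 t)
        (hIcont.stronglyMeasurable.stronglyMeasurableAtFilter) hIcont.continuousAt
    set h : ℝ → ℝ := fun t => x t i * Real.exp (-I t) with hh
    have hhd : ∀ t ∈ Icc (0:ℝ) T, HasDerivAt h 0 t := by
      intro t ht
      have h1 : HasDerivAt (fun s => x s i) (x t i * φ i (x t)) t :=
        hODE t ht (hin t ht) i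
      have h2 : HasDerivAt (fun s => Real.exp (-I s)) (Real.exp (-I t) * -(φ i (x t))) t :=
        ((hId t).neg).exp
      have := h1.fun_mul h2
      rw [hh]
      rw [show x t i * φ i (x t) * Real.exp (-I t) + x t i * (Real.exp (-I t) * -φ i (x t)) = (0:ℝ) by ring] at this
      exact this
    have hconst : h tstar = h 0 := by
      have hsub : Icc (0:ℝ) tstar ⊆ Icc (0:ℝ) T :=
        Icc_subset_Icc le_rfl (by rw [hT]; linarith)
      have := constant_of_has_deriv_right_zero
        (f := h) (a := 0) (b := tstar)
        (fun t ht => ((hhd t (hsub ht)).continuousAt).continuousWithinAt)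
        (fun t ht => ((hhd t (hsub ⟨ht.1, ht.2.le⟩)).hasDerivWithinAt))
      exact this tstar ⟨htstar0, le_refl tstar⟩
    have hh0 : h 0 = δ := by
      simp only [hh, hI]
      rw [hx0]
      simp [hp, hxsi]
    have hxt : x tstar i = δ * Real.exp (I tstar) := by
      have h0 : h tstar = δ := by rw [hconst, hh0]
      have h1 : x tstar i * Real.exp (-I tstar) = δ := h0
      have h2 := congrArg (fun z : ℝ => z * Real.exp (I tstar)) h1
      rw [mul_assoc, ← Real.exp_add, neg_add_cancel, Real.exp_zero, mul_one] at h2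
      exact h2
    have hIlow : c / 2 * tstar ≤ I tstar := by
      rw [hI]
      have : ∫ s in (0:ℝ)..tstar, (c/2 : ℝ) ≤ ∫ s in (0:ℝ)..tstar, φ i (x s) := by
        apply intervalIntegral.integral_mono_on htstar0
          (intervalIntegrable_const) (hIcont.intervalIntegrable 0 tstar)
        intro s hs
        apply hφR
        rw [mem_closedBall]
        exact (hin s ⟨hs.1, le_trans hs.2 (by rw [hT]; linarith)⟩).le
      rw [intervalIntegral.integral_const, sub_zero, smul_eq_mul, mul_comm] at this
      exact this
    have hgrow : R ≤ x tstar i := by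
      rw [hxt]
      have h1 : Real.exp (c / 2 * tstar) ≤ Real.exp (I tstar) :=
        Real.exp_le_exp.2 hIlow
      have h2 : c / 2 * tstar = Real.log (R / δ) := by
        rw [htstar]
        field_simp
      rw [h2] at h1
      rw [Real.exp_log (by positivity)] at h1
      calc R = δ * (R / δ) := by field_simp
        _ ≤ δ * Real.exp (I tstar) := mul_le_mul_of_nonneg_left h1 hδpos.le
    have hmem2 : x tstar ∈ ball xs (R / 2) :=
      hstay tstar ⟨htstar0, by rw [hT]; linarith⟩
    have : dist (x tstar i) (xs i) ≤ dist (x tstar) xs := dist_le_pi_dist _ _ i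
    rw [mem_ball] at hmem2
    rw [hxsi, Real.dist_eq, sub_zero] at this
    have : x tstar i < R / 2 := lt_of_le_of_lt (le_trans (le_abs_self _) this) hmem2
    linarith
  · -- the solution exits: use stability up to the exit time
    have hAclosed : IsClosed A := by
      rw [hA]
      exact isClosed_Icc.inter
        (isClosed_le continuous_const (continuous_dist.comp (hxc.prodMk continuous_const)))
    have hAbdd : BddBelow A := ⟨0, fun t ht => ht.1.1⟩
    set t₁ : ℝ := sInf A with ht₁
    have ht₁A : t₁ ∈ A := hAclosed.csInf_mem hAne hAbdd
    have ht₁0 : 0 < t₁ := by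
      rcases lt_or_eq_of_le (ht₁A.1.1) with h | h
      · exact h
      · exfalso
        have h2 := ht₁A.2
        simp only [Set.mem_setOf_eq] at h2
        rw [← h] at h2
        linarith
    have hbefore : ∀ t ∈ Ico (0:ℝ) t₁, dist (x t) xs < R := by
      intro t ht
      by_contra hcon
      push_neg at hcon
      have htA : t ∈ A := ⟨⟨ht.1, le_trans ht.2.le ht₁A.1.2⟩, hcon⟩
      have := csInf_le hAbdd htA
      rw [← ht₁] at this
      linarith [ht.2]
    have hODE' : ∀ t ∈ Ico (0:ℝ) t₁, ∀ j,
        HasDerivAt (fun s => x s j) (x t j * φ j (x t)) t := by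
      intro t ht
      exact hODE t ⟨ht.1, le_trans ht.2.le ht₁A.1.2⟩ (hbefore t ht)
    have hstay := hWs t₁ ht₁0 x hODE' (by rw [hx0]; exact hpW) (by rw [hx0]; exact hppos)
    -- continuity: x t₁ must be in the closed ball of radius R/2, contradiction
    have hlim : dist (x t₁) xs ≤ R / 2 := by
      have hne : (𝓝[Ico (0:ℝ) t₁] t₁).NeBot := by
        apply mem_closure_iff_nhdsWithin_neBot.mp
        rw [closure_Ico (ne_of_lt ht₁0)]
        exact ⟨ht₁0.le, le_refl t₁⟩
      apply le_of_tendsto (x := 𝓝[Ico (0:ℝ) t₁] t₁)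
        (((continuous_dist.comp (hxc.prodMk continuous_const)).continuousAt).continuousWithinAt)
      filter_upwards [self_mem_nhdsWithin] with t ht
      have := hstay t ht
      rw [mem_ball] at this
      exact this.le
    have h2 := ht₁A.2
    simp only [Set.mem_setOf_eq] at h2
    linarith
end
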